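/- arXiv:1701.08335 — 2 statements merged into one kernel-verified Lean document; each statement's English description precedes it below -/
import Mathlib

section
/- Let C_1, C_2, C_3 be the three 4-cycles of K_4, and let G_0, G_1, G_2, G_3 be graphs whose edge sets partition E(K_n). Then the six sets E(C_i) × E(G_i) for i = 1,2,3 and E(K_4 − C_i) × E(G_0 ∪ G_i) for i = 1,2,3 partition E(K_4) × E(K_n). Consequently, g(K_4, K_n) ≤ Σ_{i=1}^{3} ( f_2(G_i) + 2 f_2(G_0 ∪ G_i) ). -/
open Finset

/-- Edge set of the complete bipartite graph with parts `A` and `B`. -/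
def bicliqueEdges {V : Type*} (A B : Finset V) : Set (Sym2 V) :=
  {e | ∃ a ∈ A, ∃ b ∈ B, e = s(a, b)}

/-- `f_2(G)`: minimum number of complete bipartite subgraphs needed to partition
the edge set of the graph `G`. -/
noncomputable def f2 {V : Type*} (G : SimpleGraph V) : ℕ :=
  sInf {m | ∃ A B : Fin m → Finset V,
    (∀ k, Disjoint (A k) (B k)) ∧
    (∀ k, bicliqueEdges (A k) (B k) ⊆ G.edgeSet) ∧
    ∀ e ∈ G.edgeSet, ∃! k, e ∈ bicliqueEdges (A k) (B k)}

/-- Edge set of the complete `r`-partite `r`-uniform hypergraph with parts `P`. -/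
def crossEdges {V : Type*} [DecidableEq V] {r : ℕ} (P : Fin r → Finset V) : Set (Finset V) :=
  {e | ∃ f : Fin r → V, (∀ i, f i ∈ P i) ∧ e = Finset.image f Finset.univ}

/-- `f_r(n)`: minimum number of complete `r`-partite `r`-uniform hypergraphs needed to
partition the edge set of the complete `r`-uniform hypergraph on `n` vertices. -/
noncomputable def fr (r n : ℕ) : ℕ :=
  sInf {m | ∃ P : Fin m → Fin r → Finset (Fin n),
    (∀ k, Pairwise (Function.onFun Disjoint (P k))) ∧
    ∀ e : Finset (Fin n), e.card = r → ∃! k, e ∈ crossEdges (P k)}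

/-- `g(G,H)`: minimum number of blocks (products of edge sets of complete
bipartite subgraphs of `G` and `H` respectively) needed to partition `E(G) × E(H)`. -/
noncomputable def gGH {V W : Type*} (G : SimpleGraph V) (H : SimpleGraph W) : ℕ :=
  sInf {m | ∃ A B : Fin m → Finset V, ∃ C D : Fin m → Finset W,
    (∀ k, Disjoint (A k) (B k)) ∧ (∀ k, Disjoint (C k) (D k)) ∧
    (∀ k, bicliqueEdges (A k) (B k) ⊆ G.edgeSet) ∧
    (∀ k, bicliqueEdges (C k) (D k) ⊆ H.edgeSet) ∧
    ∀ p : Sym2 V × Sym2 W, p.1 ∈ G.edgeSet → p.2 ∈ H.edgeSet →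
      ∃! k, p.1 ∈ bicliqueEdges (A k) (B k) ∧ p.2 ∈ bicliqueEdges (C k) (D k)}

/-- `g(n) = g(K_n, K_n)`. -/
noncomputable def gn (n : ℕ) : ℕ :=
  gGH (SimpleGraph.completeGraph (Fin n)) (SimpleGraph.completeGraph (Fin n))

/-- The three 4-cycles of `K_4`, each a complete bipartite graph `K_{2,2}`. -/
def cyc : Fin 3 → SimpleGraph (Fin 4)
  | 0 => SimpleGraph.fromEdgeSet (bicliqueEdges {0, 1} {2, 3})
  | 1 => SimpleGraph.fromEdgeSet (bicliqueEdges {0, 2} {1, 3})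
  | 2 => SimpleGraph.fromEdgeSet (bicliqueEdges {0, 3} {1, 2})

def cycP : Fin 3 → Finset (Fin 4) × Finset (Fin 4) := ![({0,1},{2,3}), ({0,2},{1,3}), ({0,3},{1,2})]
def mat : Fin 3 → Fin 2 → Fin 4 × Fin 4 := ![![(0,1),(2,3)], ![(0,2),(1,3)], ![(0,3),(1,2)]]

lemma cyc_eq (i : Fin 3) : cyc i = SimpleGraph.fromEdgeSet (bicliqueEdges (cycP i).1 (cycP i).2) := by
  fin_cases i <;> rfl

lemma factC : ∀ (a b : Fin 4), a ≠ b → ∀ i : Fin 3,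
    (s(a,b) ∈ bicliqueEdges (cycP i).1 (cycP i).2 ↔
      ¬ ∃ j : Fin 2, s(a,b) = s((mat i j).1, (mat i j).2)) := by
  simp only [bicliqueEdges, Set.mem_setOf_eq, Sym2.eq_iff]; decide

lemma factE : ∀ (a b : Fin 4), a ≠ b → ∃ i j, s(a,b) = s((mat i j).1, (mat i j).2) := by
  simp only [Sym2.eq_iff]; decide

lemma factU : ∀ (i i' : Fin 3) (j j' : Fin 2),
    s((mat i j).1, (mat i j).2) = s((mat i' j').1, (mat i' j').2) → i = i' ∧ j = j' := by
  simp only [Sym2.eq_iff]; decide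

lemma factD : ∀ i : Fin 3, Disjoint (cycP i).1 (cycP i).2 := by decide
lemma factM : ∀ (i : Fin 3) (j : Fin 2), (mat i j).1 ≠ (mat i j).2 := by decide

lemma mem_singleton_biclique {V : Type*} (x y : V) (e : Sym2 V) :
    e ∈ bicliqueEdges {x} {y} ↔ e = s(x, y) := by
  simp [bicliqueEdges]

lemma mem_cyc_iff (i : Fin 3) (e : Sym2 (Fin 4)) :
    e ∈ (cyc i).edgeSet ↔ e ∈ bicliqueEdges (cycP i).1 (cycP i).2 := by
  rw [cyc_eq, SimpleGraph.edgeSet_fromEdgeSet]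
  constructor
  · exact fun h => h.1
  · intro h
    refine ⟨h, ?_⟩
    obtain ⟨a, ha, b, hb, rfl⟩ := h
    simp only [Sym2.diagSet, Set.mem_setOf_eq, Sym2.mk_isDiag_iff]
    exact fun hab => Finset.disjoint_left.mp (factD i) ha (hab ▸ hb)

lemma biclique_subset_complete {V : Type*} {A B : Finset V} (h : Disjoint A B) :
    bicliqueEdges A B ⊆ (SimpleGraph.completeGraph V).edgeSet := by
  rintro e ⟨a, ha, b, hb, rfl⟩
  simp only [SimpleGraph.mem_edgeSet, SimpleGraph.completeGraph, SimpleGraph.top_adj]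
  exact fun hab => Finset.disjoint_left.mp h ha (hab ▸ hb)

lemma mem_complete_iff {V : Type*} (a b : V) :
    s(a,b) ∈ (SimpleGraph.completeGraph V).edgeSet ↔ a ≠ b := by
  simp [SimpleGraph.completeGraph, SimpleGraph.mem_edgeSet]

lemma f2_spec {n : ℕ} (G : SimpleGraph (Fin n)) :
    ∃ A B : Fin (f2 G) → Finset (Fin n),
      (∀ k, Disjoint (A k) (B k)) ∧
      (∀ k, bicliqueEdges (A k) (B k) ⊆ G.edgeSet) ∧
      ∀ e ∈ G.edgeSet, ∃! k, e ∈ bicliqueEdges (A k) (B k) := by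
  classical
  have hfin : G.edgeSet.Finite := Set.toFinite _
  set s := hfin.toFinset with hs
  have key : ∀ e : {x // x ∈ s}, ∃ ab : Fin n × Fin n,
      (e : Sym2 (Fin n)) = s(ab.1, ab.2) ∧ G.Adj ab.1 ab.2 := by
    rintro ⟨e, he⟩
    rw [hs, Set.Finite.mem_toFinset] at he
    induction e using Sym2.ind with
    | _ a b => exact ⟨(a, b), rfl, he⟩
  choose ab hab hadj using key
  have hne : Set.Nonempty {m | ∃ A B : Fin m → Finset (Fin n),
      (∀ k, Disjoint (A k) (B k)) ∧
      (∀ k, bicliqueEdges (A k) (B k) ⊆ G.edgeSet) ∧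
      ∀ e ∈ G.edgeSet, ∃! k, e ∈ bicliqueEdges (A k) (B k)} := by
    refine ⟨s.card, fun k => {(ab (s.equivFin.symm k)).1},
      fun k => {(ab (s.equivFin.symm k)).2}, ?_, ?_, ?_⟩
    · intro k
      exact Finset.disjoint_singleton.mpr (G.ne_of_adj (hadj _))
    · intro k e he
      rw [mem_singleton_biclique] at he
      rw [he]
      exact (SimpleGraph.mem_edgeSet G).mpr (hadj _)
    · intro e he
      have hes : e ∈ s := by rw [hs, Set.Finite.mem_toFinset]; exact he
      refine ⟨s.equivFin ⟨e, hes⟩, ?_, ?_⟩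
      · simp only [mem_singleton_biclique, ← hab]
        simp
      · intro k' hk'
        rw [mem_singleton_biclique] at hk'
        have h1 : ((s.equivFin.symm k' : {x // x ∈ s}) : Sym2 (Fin n)) = e := by
          rw [hab, ← hk']
        have h2 : s.equivFin.symm k' = ⟨e, hes⟩ := Subtype.ext h1
        rw [← h2, Equiv.apply_symm_apply]
  have h := Nat.sInf_mem hne
  exact h

lemma gGH_le_card_aux {V W : Type*} (G : SimpleGraph V) (H : SimpleGraph W)
    {ι : Type} [Fintype ι] (A B : ι → Finset V) (C D : ι → Finset W)
    (h1 : ∀ k, Disjoint (A k) (B k)) (h2 : ∀ k, Disjoint (C k) (D k))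
    (h3 : ∀ k, bicliqueEdges (A k) (B k) ⊆ G.edgeSet)
    (h4 : ∀ k, bicliqueEdges (C k) (D k) ⊆ H.edgeSet)
    (h5 : ∀ p : Sym2 V × Sym2 W, p.1 ∈ G.edgeSet → p.2 ∈ H.edgeSet →
      ∃! k, p.1 ∈ bicliqueEdges (A k) (B k) ∧ p.2 ∈ bicliqueEdges (C k) (D k)) :
    sInf {m | ∃ A B : Fin m → Finset V, ∃ C D : Fin m → Finset W,
    (∀ k, Disjoint (A k) (B k)) ∧ (∀ k, Disjoint (C k) (D k)) ∧
    (∀ k, bicliqueEdges (A k) (B k) ⊆ G.edgeSet) ∧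
    (∀ k, bicliqueEdges (C k) (D k) ⊆ H.edgeSet) ∧
    ∀ p : Sym2 V × Sym2 W, p.1 ∈ G.edgeSet → p.2 ∈ H.edgeSet →
      ∃! k, p.1 ∈ bicliqueEdges (A k) (B k) ∧ p.2 ∈ bicliqueEdges (C k) (D k)}
      ≤ Fintype.card ι := by
  apply Nat.sInf_le
  have eq : Fin (Fintype.card ι) ≃ ι := (Fintype.equivFin ι).symm
  refine ⟨A ∘ eq, B ∘ eq, C ∘ eq, D ∘ eq, fun k => h1 _, fun k => h2 _,
    fun k => h3 _, fun k => h4 _, fun p hp hq => ?_⟩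
  obtain ⟨k, hk, hu⟩ := h5 p hp hq
  refine ⟨eq.symm k, ?_, ?_⟩
  · simpa using hk
  · intro k' hk'
    have := hu (eq k') hk'
    rw [← this, Equiv.symm_apply_apply]

lemma edgeSet_subset_complete {V : Type*} (G : SimpleGraph V) :
    G.edgeSet ⊆ (SimpleGraph.completeGraph V).edgeSet :=
  SimpleGraph.edgeSet_mono le_top

theorem stmt13 (n : ℕ) (G : Fin 4 → SimpleGraph (Fin n))
    (hpart : ∀ e ∈ (SimpleGraph.completeGraph (Fin n)).edgeSet, ∃! t, e ∈ (G t).edgeSet) :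
    (∀ p : Sym2 (Fin 4) × Sym2 (Fin n),
      p.1 ∈ (SimpleGraph.completeGraph (Fin 4)).edgeSet → p.2 ∈ (SimpleGraph.completeGraph (Fin n)).edgeSet →
      ∃! t : Fin 3 ⊕ Fin 3,
        (match t with
          | Sum.inl i => p.1 ∈ (cyc i).edgeSet ∧ p.2 ∈ (G i.succ).edgeSet
          | Sum.inr i => p.1 ∈ (SimpleGraph.completeGraph (Fin 4) \ cyc i).edgeSet ∧
              p.2 ∈ (G 0 ⊔ G i.succ).edgeSet)) ∧
    gGH (SimpleGraph.completeGraph (Fin 4)) (SimpleGraph.completeGraph (Fin n)) ≤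
      ∑ i : Fin 3, (f2 (G i.succ) + 2 * f2 (G 0 ⊔ G i.succ)) := by
  constructor
  · rintro ⟨e, f⟩ h1 h2
    induction e using Sym2.ind with
    | _ a b =>
    simp only
    have hab : a ≠ b := (mem_complete_iff a b).mp h1
    obtain ⟨t, ht, htu⟩ := hpart f h2
    have hsd : ∀ i : Fin 3, s(a,b) ∈ (SimpleGraph.completeGraph (Fin 4) \ cyc i).edgeSet ↔
        (s(a,b) ∈ (SimpleGraph.completeGraph (Fin 4)).edgeSet ∧ ¬ s(a,b) ∈ (cyc i).edgeSet) := by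
      intro i; rw [SimpleGraph.edgeSet_sdiff]; exact Iff.rfl
    have hsup : ∀ i : Fin 3, f ∈ (G 0 ⊔ G i.succ).edgeSet ↔
        (f ∈ (G 0).edgeSet ∨ f ∈ (G i.succ).edgeSet) := by
      intro i; rw [SimpleGraph.edgeSet_sup]; exact Iff.rfl
    rcases Fin.eq_zero_or_eq_succ t with rfl | ⟨i₀, rfl⟩
    · -- f ∈ G 0
      obtain ⟨i, j, hij⟩ := factE a b hab
      refine ⟨Sum.inr i, ?_, ?_⟩
      · refine ⟨(hsd i).mpr ⟨h1, ?_⟩, (hsup i).mpr (Or.inl ht)⟩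
        rw [mem_cyc_iff, factC a b hab i]
        exact fun h => h ⟨j, hij⟩
      · rintro (i' | i') ht'
        · exact absurd (htu i'.succ ht'.2) (Fin.succ_ne_zero i')
        · obtain ⟨he', _⟩ := ht'
          rw [hsd] at he'
          have : ∃ j', s(a,b) = s((mat i' j').1, (mat i' j').2) := by
            by_contra hc
            exact he'.2 ((mem_cyc_iff i' _).mpr ((factC a b hab i').mpr hc))
          obtain ⟨j', hj'⟩ := this
          have := factU i' i j' j (hj'.symm.trans hij)
          rw [this.1]
    · -- f ∈ G i₀.succ
      have hne0 : ∀ i' : Fin 3, f ∉ (G 0).edgeSet := by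
        intro i' hf0
        exact (Fin.succ_ne_zero i₀).symm ((htu 0 hf0).symm ▸ rfl)
      have hGi : ∀ i' : Fin 3, f ∈ (G i'.succ).edgeSet → i' = i₀ := by
        intro i' hf'
        exact Fin.succ_inj.mp (htu i'.succ hf')
      by_cases hcy : s(a,b) ∈ (cyc i₀).edgeSet
      · refine ⟨Sum.inl i₀, ⟨hcy, ht⟩, ?_⟩
        rintro (i' | i') ht'
        · rw [hGi i' ht'.2]
        · obtain ⟨he', hf'⟩ := ht'
          rcases (hsup i').mp hf' with h0 | hsucc
          · exact absurd h0 (hne0 i')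
          · rw [hGi i' hsucc] at he'
            exact absurd hcy ((hsd i₀).mp he').2
      · refine ⟨Sum.inr i₀, ⟨(hsd i₀).mpr ⟨h1, hcy⟩, (hsup i₀).mpr (Or.inr ht)⟩, ?_⟩
        rintro (i' | i') ht'
        · obtain ⟨he', hf'⟩ := ht'
          rw [hGi i' hf'] at he'
          exact absurd he' hcy
        · obtain ⟨_, hf'⟩ := ht'
          rcases (hsup i').mp hf' with h0 | hsucc
          · exact absurd h0 (hne0 i')
          · rw [hGi i' hsucc]
  · -- part (b)
    classical
    choose A₁ B₁ hd1 hs1 hc1 using fun i : Fin 3 => f2_spec (G i.succ)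
    choose A₂ B₂ hd2 hs2 hc2 using fun i : Fin 3 => f2_spec (G 0 ⊔ G i.succ)
    have hcard : Fintype.card ((i : Fin 3) × (Fin (f2 (G i.succ)) ⊕ Fin (f2 (G 0 ⊔ G i.succ)) × Fin 2)) = ∑ i : Fin 3, (f2 (G i.succ) + 2 * f2 (G 0 ⊔ G i.succ)) := by
      rw [Fintype.card_sigma]
      refine Finset.sum_congr rfl fun i _ => ?_
      simp only [Fintype.card_sum, Fintype.card_prod, Fintype.card_fin]
      ring
    rw [← hcard]
    unfold gGH
    refine gGH_le_card_aux (SimpleGraph.completeGraph (Fin 4)) (SimpleGraph.completeGraph (Fin n))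
      (fun x : (i : Fin 3) × (Fin (f2 (G i.succ)) ⊕ Fin (f2 (G 0 ⊔ G i.succ)) × Fin 2) => match x with
        | ⟨i, Sum.inl _⟩ => (cycP i).1
        | ⟨i, Sum.inr (_, j)⟩ => {(mat i j).1})
      (fun x : (i : Fin 3) × (Fin (f2 (G i.succ)) ⊕ Fin (f2 (G 0 ⊔ G i.succ)) × Fin 2) => match x with
        | ⟨i, Sum.inl _⟩ => (cycP i).2
        | ⟨i, Sum.inr (_, j)⟩ => {(mat i j).2})
      (fun x : (i : Fin 3) × (Fin (f2 (G i.succ)) ⊕ Fin (f2 (G 0 ⊔ G i.succ)) × Fin 2) => match x with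
        | ⟨i, Sum.inl k⟩ => A₁ i k
        | ⟨i, Sum.inr (k, _)⟩ => A₂ i k)
      (fun x : (i : Fin 3) × (Fin (f2 (G i.succ)) ⊕ Fin (f2 (G 0 ⊔ G i.succ)) × Fin 2) => match x with
        | ⟨i, Sum.inl k⟩ => B₁ i k
        | ⟨i, Sum.inr (k, _)⟩ => B₂ i k)
      ?_ ?_ ?_ ?_ ?_
    · rintro ⟨i, k | ⟨k, j⟩⟩
      · exact factD i
      · exact Finset.disjoint_singleton.mpr (factM i j)
    · rintro ⟨i, k | ⟨k, j⟩⟩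
      · exact hd1 i k
      · exact hd2 i k
    · rintro ⟨i, k | ⟨k, j⟩⟩
      · exact biclique_subset_complete (factD i)
      · exact biclique_subset_complete (Finset.disjoint_singleton.mpr (factM i j))
    · rintro ⟨i, k | ⟨k, j⟩⟩
      · exact (hs1 i k).trans (edgeSet_subset_complete _)
      · exact (hs2 i k).trans (edgeSet_subset_complete _)
    · rintro ⟨e, f⟩ h1 h2
      induction e using Sym2.ind with
      | _ a b =>
      have hab : a ≠ b := (mem_complete_iff a b).mp h1
      obtain ⟨t, ht, htu⟩ := hpart f h2
      have hsup : ∀ i : Fin 3, f ∈ (G 0 ⊔ G i.succ).edgeSet ↔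
          (f ∈ (G 0).edgeSet ∨ f ∈ (G i.succ).edgeSet) := by
        intro i; rw [SimpleGraph.edgeSet_sup]; exact Iff.rfl
      rcases Fin.eq_zero_or_eq_succ t with rfl | ⟨i₀, rfl⟩
      · -- f ∈ G 0
        obtain ⟨i, j, hij⟩ := factE a b hab
        obtain ⟨k, hk, hku⟩ := hc2 i f ((hsup i).mpr (Or.inl ht))
        refine ⟨⟨i, Sum.inr (k, j)⟩, ⟨(mem_singleton_biclique _ _ _).mpr hij, hk⟩, ?_⟩
        rintro ⟨i', k' | ⟨k', j'⟩⟩ ⟨he', hf'⟩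
        · exact absurd (htu i'.succ (hs1 i' k' hf')) (Fin.succ_ne_zero i')
        · have he2 := (mem_singleton_biclique _ _ _).mp he'
          obtain ⟨rfl, rfl⟩ := factU i' i j' j (he2.symm.trans hij)
          rw [hku k' hf']
      · -- f ∈ G i₀.succ
        have hne0 : f ∉ (G 0).edgeSet := fun h0 =>
          (Fin.succ_ne_zero i₀).symm (htu 0 h0)
        have hGi : ∀ i' : Fin 3, f ∈ (G i'.succ).edgeSet → i' = i₀ := fun i' hf' =>
          Fin.succ_inj.mp (htu i'.succ hf')
        by_cases hcy : s(a,b) ∈ bicliqueEdges (cycP i₀).1 (cycP i₀).2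
        · obtain ⟨k, hk, hku⟩ := hc1 i₀ f ht
          refine ⟨⟨i₀, Sum.inl k⟩, ⟨hcy, hk⟩, ?_⟩
          rintro ⟨i', k' | ⟨k', j'⟩⟩ ⟨he', hf'⟩
          · obtain rfl : i' = i₀ := hGi i' (hs1 i' k' hf')
            rw [hku k' hf']
          · rcases (hsup i').mp (hs2 i' k' hf') with h0 | hsucc
            · exact absurd h0 hne0
            · obtain rfl : i' = i₀ := hGi i' hsucc
              have he2 := (mem_singleton_biclique _ _ _).mp he'
              exact absurd ⟨j', he2⟩ ((factC a b hab _).mp hcy)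
        · have hex : ∃ j, s(a,b) = s((mat i₀ j).1, (mat i₀ j).2) :=
            not_not.mp (fun hc => hcy ((factC a b hab i₀).mpr hc))
          obtain ⟨j, hj⟩ := hex
          obtain ⟨k, hk, hku⟩ := hc2 i₀ f ((hsup i₀).mpr (Or.inr ht))
          refine ⟨⟨i₀, Sum.inr (k, j)⟩, ⟨(mem_singleton_biclique _ _ _).mpr hj, hk⟩, ?_⟩
          rintro ⟨i', k' | ⟨k', j'⟩⟩ ⟨he', hf'⟩
          · obtain rfl : i' = i₀ := hGi i' (hs1 i' k' hf')
            exact absurd he' hcy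
          · have he2 := (mem_singleton_biclique _ _ _).mp he'
            obtain ⟨rfl, rfl⟩ := factU i' i₀ j' j (he2.symm.trans hj)
            rw [hku k' hf']
end

section
/- For n ≥ 2, g(n) ≥ ⌈((n-1)² + 1)/2⌉. -/
open Finset

/-!
A block `(A, B) × (C, D)` of a partition of `E(K_V) × E(K_W)` gives the two complete bipartite
subgraphs `(A × C, B × D)` and `(A × D, B × C)` of the weak product `K_V * K_W`, and the `2m`
bicliques so obtained partition its edges. Writing `σ S = ∑ p ∈ S, x p`, the quadratic form `Q`
of the adjacency matrix of `K_V * K_W` is therefore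
`2 ∑ k, (σ (A k × C k) * σ (B k × D k) + σ (A k × D k) * σ (B k × C k))`,
which vanishes wherever the `2m` functionals `σ (A k × C k)`, `σ (A k × D k)` do. On the other
hand `Q x = (∑ x)² - ∑ (row sums)² - ∑ (column sums)² + ∑ x²` is positive definite on the
subspace of codimension `(|V| - 1) + (|W| - 1)` on which all row sums agree and all column sums
agree. Counting dimensions, `2m + (|V| - 1) + (|W| - 1) ≥ |V| |W|`, that is
`2m ≥ (|V| - 1) (|W| - 1) + 1`; for `|V| = |W| = n` this is the Reznick–Tiwari–West bound.
-/

section BlockPartition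

variable {V W : Type*} {m : ℕ}

def IsBlockPartition (G : SimpleGraph V) (H : SimpleGraph W)
    (A B : Fin m → Finset V) (C D : Fin m → Finset W) : Prop :=
  (∀ k, Disjoint (A k) (B k)) ∧ (∀ k, Disjoint (C k) (D k)) ∧
    (∀ k, bicliqueEdges (A k) (B k) ⊆ G.edgeSet) ∧
    (∀ k, bicliqueEdges (C k) (D k) ⊆ H.edgeSet) ∧
    ∀ p : Sym2 V × Sym2 W, p.1 ∈ G.edgeSet → p.2 ∈ H.edgeSet →
      ∃! k, p.1 ∈ bicliqueEdges (A k) (B k) ∧ p.2 ∈ bicliqueEdges (C k) (D k)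

theorem bicliqueEdges_out (e : Sym2 V) : bicliqueEdges {e.out.1} {e.out.2} = {e} := by
  ext f
  simp [bicliqueEdges, Sym2.mk, Quot.out_eq]

theorem disjoint_out_of_mem_edgeSet {G : SimpleGraph V} {e : Sym2 V} (he : e ∈ G.edgeSet) :
    Disjoint ({e.out.1} : Finset V) {e.out.2} := by
  refine Finset.disjoint_singleton.2 fun h => G.not_isDiag_of_mem_edgeSet he ?_
  simpa [Sym2.mk, Quot.out_eq] using (Sym2.mk_isDiag_iff.2 h : s(e.out.1, e.out.2).IsDiag)

theorem exists_isBlockPartition_of_finite [Finite V] [Finite W]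
    (G : SimpleGraph V) (H : SimpleGraph W) :
    ∃ m, ∃ (A B : Fin m → Finset V) (C D : Fin m → Finset W), IsBlockPartition G H A B C D := by
  let blocks := Finite.equivFin (G.edgeSet × H.edgeSet)
  let e k := (blocks.symm k).1
  let f k := (blocks.symm k).2
  refine ⟨_, fun k => {(e k).1.out.1}, fun k => {(e k).1.out.2},
    fun k => {(f k).1.out.1}, fun k => {(f k).1.out.2},
    fun k => disjoint_out_of_mem_edgeSet (e k).2, fun k => disjoint_out_of_mem_edgeSet (f k).2,
    fun k => ?_, fun k => ?_, fun p hp1 hp2 => ?_⟩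
  · simp [bicliqueEdges_out, (e k).2]
  · simp [bicliqueEdges_out, (f k).2]
  · refine ⟨blocks (⟨p.1, hp1⟩, ⟨p.2, hp2⟩), by simp [bicliqueEdges_out, e, f], ?_⟩
    rintro k ⟨hk1, hk2⟩
    simp only [bicliqueEdges_out, Set.mem_singleton_iff] at hk1 hk2
    rw [← Equiv.symm_apply_eq]
    ext <;> simp [← hk1, ← hk2, e, f]

theorem exists_isBlockPartition_gGH [Finite V] [Finite W] (G : SimpleGraph V)
    (H : SimpleGraph W) :
    ∃ (A B : Fin (gGH G H) → Finset V) (C D : Fin (gGH G H) → Finset W),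
      IsBlockPartition G H A B C D :=
  Nat.sInf_mem (exists_isBlockPartition_of_finite G H)

theorem mk_mem_bicliqueEdges {A B : Finset V} {u u' : V} :
    s(u, u') ∈ bicliqueEdges A B ↔ u ∈ A ∧ u' ∈ B ∨ u ∈ B ∧ u' ∈ A := by
  constructor
  · rintro ⟨a, ha, b, hb, hab⟩
    rcases Sym2.eq_iff.1 hab with ⟨rfl, rfl⟩ | ⟨rfl, rfl⟩
    exacts [Or.inl ⟨ha, hb⟩, Or.inr ⟨hb, ha⟩]
  · rintro (⟨hu, hu'⟩ | ⟨hu, hu'⟩)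
    exacts [⟨u, hu, u', hu', rfl⟩, ⟨u', hu', u, hu, Sym2.eq_swap⟩]

open scoped Classical in
theorem ite_mk_mem_bicliqueEdges {K : Type*} [AddMonoidWithOne K] [DecidableEq V]
    {A B : Finset V} (h : Disjoint A B) (u u' : V) :
    (if s(u, u') ∈ bicliqueEdges A B then 1 else 0 : K) =
      (if u ∈ A ∧ u' ∈ B then 1 else 0) + if u ∈ B ∧ u' ∈ A then 1 else 0 := by
  rw [mk_mem_bicliqueEdges]
  by_cases hAB : u ∈ A ∧ u' ∈ B
  · have hBA : ¬(u ∈ B ∧ u' ∈ A) := fun hBA => Finset.disjoint_left.1 h hAB.1 hBA.1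
    simp [hAB, hBA]
  · simp [hAB]

open scoped Classical in
theorem IsBlockPartition.ite_adj_eq_sum {K : Type*} [AddCommMonoid K] [DecidableEq V]
    [DecidableEq W] {A B : Fin m → Finset V} {C D : Fin m → Finset W}
    (h : IsBlockPartition (⊤ : SimpleGraph V) (⊤ : SimpleGraph W) A B C D) (p q : V × W) (t : K) :
    (if p.1 ≠ q.1 ∧ p.2 ≠ q.2 then t else 0) =
      ∑ k, if s(p.1, q.1) ∈ bicliqueEdges (A k) (B k) ∧ s(p.2, q.2) ∈ bicliqueEdges (C k) (D k)
        then t else 0 := by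
  obtain ⟨-, -, hAB, hCD, huniq⟩ := h
  split_ifs with hadj
  · obtain ⟨k, hk, hk'⟩ := huniq (s(p.1, q.1), s(p.2, q.2)) (by simpa using hadj.1)
      (by simpa using hadj.2)
    rw [Finset.sum_eq_single k (fun k' _ hne => if_neg fun h' => hne (hk' k' h')) (by simp),
      if_pos hk]
  · refine (Finset.sum_eq_zero fun k _ => if_neg ?_).symm
    rintro ⟨h1, h2⟩
    exact hadj ⟨by simpa using hAB k h1, by simpa using hCD k h2⟩

end BlockPartition

theorem Matrix.exists_ne_zero_mulVec_eq_zero_of_card_lt {K ι γ : Type*} [Field K] [Fintype ι]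
    [Fintype γ] [DecidableEq γ] (M : Matrix ι γ K) (h : Fintype.card ι < Fintype.card γ) :
    ∃ x ≠ 0, M.mulVec x = 0 := by
  obtain ⟨x, hx, hx0⟩ := Submodule.exists_mem_ne_zero_of_ne_bot
    (LinearMap.ker_ne_bot_of_finrank_lt (f := M.mulVecLin) (by simpa using h))
  exact ⟨x, hx0, hx⟩

theorem sum_ite_mem_mul {γ K : Type*} [CommRing K] [Fintype γ] [DecidableEq γ] (S : Finset γ)
    (x : γ → K) : ∑ p, (if p ∈ S then 1 else 0) * x p = ∑ p ∈ S, x p := by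
  simp [ite_mul, Finset.sum_ite_mem]

section WeakProductForm

variable {K V W : Type*} [Fintype V] [Fintype W] [DecidableEq V] [DecidableEq W]

/-- The quadratic form of the adjacency matrix of the weak product `K_V * K_W`. -/
def weakProdForm [CommRing K] (x : V × W → K) : K :=
  ∑ p, ∑ q, if p.1 ≠ q.1 ∧ p.2 ≠ q.2 then x p * x q else 0

theorem weakProdForm_eq_sum_sq [CommRing K] (x : V × W → K) :
    weakProdForm x = (∑ p, x p) ^ 2 - ∑ u, (∑ v, x (u, v)) ^ 2 - ∑ v, (∑ u, x (u, v)) ^ 2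
      + ∑ p, x p ^ 2 := by
  have hsplit : ∀ p q : V × W, (if p.1 ≠ q.1 ∧ p.2 ≠ q.2 then x p * x q else 0) =
      x p * x q - (if p.1 = q.1 then x p * x q else 0) - (if p.2 = q.2 then x p * x q else 0)
        + if p = q then x p * x q else 0 := by
    rintro ⟨u, v⟩ ⟨u', v'⟩
    by_cases hu : u = u' <;> by_cases hv : v = v' <;> simp [hu, hv]
  have hall : ∑ p, ∑ q, x p * x q = (∑ p, x p) ^ 2 := by rw [sq, Finset.sum_mul_sum]
  have hrows : ∑ p, ∑ q, (if p.1 = q.1 then x p * x q else 0) = ∑ u, (∑ v, x (u, v)) ^ 2 := by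
    simp only [Fintype.sum_prod_type, sq, Finset.sum_mul_sum]
    refine Finset.sum_congr rfl fun u _ => Finset.sum_congr rfl fun v _ => ?_
    rw [Finset.sum_eq_single u (fun u' _ hu' => Finset.sum_eq_zero fun _ _ => if_neg hu'.symm)
      (by simp)]
    exact Finset.sum_congr rfl fun _ _ => if_pos rfl
  have hcols : ∑ p, ∑ q, (if p.2 = q.2 then x p * x q else 0) = ∑ v, (∑ u, x (u, v)) ^ 2 := by
    simp only [Fintype.sum_prod_type, sq, Finset.sum_mul_sum]
    rw [Finset.sum_comm]
    refine Finset.sum_congr rfl fun v _ => ?_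
    rw [Finset.sum_comm]
    refine Finset.sum_congr rfl fun u _ => ?_
    rw [Finset.sum_comm, Finset.sum_eq_single v
      (fun v' _ hv' => Finset.sum_eq_zero fun _ _ => if_neg hv'.symm) (by simp)]
    exact Finset.sum_congr rfl fun _ _ => (if_pos rfl).trans (mul_comm _ _)
  have hdiag : ∑ p, ∑ q, (if p = q then x p * x q else 0) = ∑ p, x p ^ 2 := by simp [sq]
  simp only [weakProdForm, hsplit, Finset.sum_add_distrib, Finset.sum_sub_distrib, hall, hrows,
    hcols, hdiag]

theorem weakProdForm_pos [Field K] [LinearOrder K] [IsStrictOrderedRing K]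
    (hV : 2 ≤ Fintype.card V) (hW : 2 ≤ Fintype.card W) {x : V × W → K} (hx : x ≠ 0) {r c : K}
    (hrow : ∀ u, ∑ v, x (u, v) = r) (hcol : ∀ v, ∑ u, x (u, v) = c) :
    0 < weakProdForm x := by
  have ha : (2 : K) ≤ Fintype.card V := by exact_mod_cast hV
  have hb : (2 : K) ≤ Fintype.card W := by exact_mod_cast hW
  set a : K := (Fintype.card V : K)
  set b : K := (Fintype.card W : K)
  set T := ∑ p, x p
  have hTr : T = a * r := by simp [T, a, Fintype.sum_prod_type, hrow]
  have hTc : T = b * c := by simp [T, b, Fintype.sum_prod_type, Finset.sum_comm (γ := V), hcol]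
  have hkey : a * b * (T ^ 2 - a * r ^ 2 - b * c ^ 2) = T ^ 2 * ((a - 1) * (b - 1) - 1) := by
    linear_combination (b * (T + a * r)) * hTr + (a * (T + b * c)) * hTc
  have hmarginals : 0 ≤ T ^ 2 - a * r ^ 2 - b * c ^ 2 := by
    refine (mul_nonneg_iff_of_pos_left (by positivity)).1 (hkey ▸ mul_nonneg (sq_nonneg T) ?_)
    nlinarith
  have hsq : 0 < ∑ p, x p ^ 2 := by
    refine lt_of_le_of_ne (Finset.sum_nonneg fun p _ => sq_nonneg (x p)) fun h => hx ?_
    simp only [sq] at h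
    exact funext fun p => (Finset.sum_mul_self_eq_zero_iff _ _).1 h.symm p (Finset.mem_univ p)
  simp only [weakProdForm_eq_sum_sq, hrow, hcol, Finset.sum_const, Finset.card_univ, nsmul_eq_mul]
  linarith

theorem sum_sum_ite_mem_product_mul [CommRing K] (X X' : Finset V) (Y Y' : Finset W)
    (x : V × W → K) :
    ∑ p, ∑ q, (if p.1 ∈ X ∧ q.1 ∈ X' then 1 else 0) * (if p.2 ∈ Y ∧ q.2 ∈ Y' then 1 else 0) *
      (x p * x q) = (∑ p ∈ X ×ˢ Y, x p) * ∑ q ∈ X' ×ˢ Y', x q := by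
  have h : ∀ p q : V × W, (if p.1 ∈ X ∧ q.1 ∈ X' then (1 : K) else 0) *
      (if p.2 ∈ Y ∧ q.2 ∈ Y' then 1 else 0) * (x p * x q) =
        (if p ∈ X ×ˢ Y then x p else 0) * (if q ∈ X' ×ˢ Y' then x q else 0) := by
    intro p q
    simp only [Finset.mem_product]
    split_ifs <;> simp_all
  simp only [h, ← Finset.sum_mul_sum, Finset.sum_ite_mem, Finset.univ_inter]

open scoped Classical in
theorem sum_sum_ite_mem_block [CommRing K] {A B : Finset V} {C D : Finset W}
    (hAB : Disjoint A B) (hCD : Disjoint C D) (x : V × W → K) :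
    ∑ p, ∑ q, (if s(p.1, q.1) ∈ bicliqueEdges A B ∧ s(p.2, q.2) ∈ bicliqueEdges C D
      then x p * x q else 0) =
      2 * ((∑ p ∈ A ×ˢ C, x p) * (∑ p ∈ B ×ˢ D, x p) +
        (∑ p ∈ A ×ˢ D, x p) * ∑ p ∈ B ×ˢ C, x p) := by
  have h : ∀ p q : V × W, (if s(p.1, q.1) ∈ bicliqueEdges A B ∧ s(p.2, q.2) ∈ bicliqueEdges C D
      then x p * x q else 0) = (if s(p.1, q.1) ∈ bicliqueEdges A B then 1 else 0) *
        (if s(p.2, q.2) ∈ bicliqueEdges C D then 1 else 0) * (x p * x q) := by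
    intro p q
    split_ifs <;> simp_all
  simp only [h, ite_mk_mem_bicliqueEdges hAB, ite_mk_mem_bicliqueEdges hCD, add_mul, mul_add,
    Finset.sum_add_distrib, sum_sum_ite_mem_product_mul]
  ring

variable {m : ℕ} {A B : Fin m → Finset V} {C D : Fin m → Finset W}

open scoped Classical in
theorem IsBlockPartition.weakProdForm_eq_sum_blocks [CommRing K]
    (h : IsBlockPartition (⊤ : SimpleGraph V) (⊤ : SimpleGraph W) A B C D) (x : V × W → K) :
    weakProdForm x = 2 * ∑ k, ((∑ p ∈ A k ×ˢ C k, x p) * (∑ p ∈ B k ×ˢ D k, x p) +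
      (∑ p ∈ A k ×ˢ D k, x p) * ∑ p ∈ B k ×ˢ C k, x p) := by
  simp only [weakProdForm, h.ite_adj_eq_sum]
  rw [Finset.mul_sum, Finset.sum_congr rfl fun p _ => Finset.sum_comm, Finset.sum_comm]
  exact Finset.sum_congr rfl fun k _ => sum_sum_ite_mem_block (h.1 k) (h.2.1 k) x

theorem IsBlockPartition.card_sub_one_mul_card_sub_one_add_one_le
    (hV : 2 ≤ Fintype.card V) (hW : 2 ≤ Fintype.card W)
    (h : IsBlockPartition (⊤ : SimpleGraph V) (⊤ : SimpleGraph W) A B C D) :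
    (Fintype.card V - 1) * (Fintype.card W - 1) + 1 ≤ 2 * m := by
  by_contra! hlt
  obtain ⟨u₀⟩ : Nonempty V := Fintype.card_pos_iff.1 (by omega)
  obtain ⟨v₀⟩ : Nonempty W := Fintype.card_pos_iff.1 (by omega)
  let rect (X : Finset V) (Y : Finset W) (p : V × W) : ℚ := if p ∈ X ×ˢ Y then 1 else 0
  let M : Matrix ((Fin m ⊕ Fin m) ⊕ ({u // u ≠ u₀} ⊕ {v // v ≠ v₀})) (V × W) ℚ :=
    Sum.elim (Sum.elim (fun k => rect (A k) (C k)) (fun k => rect (A k) (D k)))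
      (Sum.elim (fun u => rect {u.1} univ - rect {u₀} univ)
        (fun v => rect univ {v.1} - rect univ {v₀}))
  have hcard : Fintype.card ((Fin m ⊕ Fin m) ⊕ ({u // u ≠ u₀} ⊕ {v // v ≠ v₀})) <
      Fintype.card (V × W) := by
    simp only [Fintype.card_sum, Fintype.card_fin, Fintype.card_prod, ne_eq,
      Fintype.card_subtype_compl, Fintype.card_unique]
    zify [(by omega : 1 ≤ Fintype.card V), (by omega : 1 ≤ Fintype.card W)] at hlt ⊢
    nlinarith
  obtain ⟨x, hx0, hMx⟩ := M.exists_ne_zero_mulVec_eq_zero_of_card_lt hcard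
  have hM : ∀ i, ∑ p, M i p * x p = 0 := fun i => congrFun hMx i
  have hblocks : ∀ k, ∑ p ∈ A k ×ˢ C k, x p = 0 ∧ ∑ p ∈ A k ×ˢ D k, x p = 0 := fun k =>
    ⟨by simpa only [M, rect, Sum.elim_inl, sum_ite_mem_mul] using hM (.inl (.inl k)),
      by simpa only [M, rect, Sum.elim_inl, Sum.elim_inr, sum_ite_mem_mul] using hM (.inl (.inr k))⟩
  have hrow : ∀ u, ∑ v, x (u, v) = ∑ v, x (u₀, v) := by
    intro u
    rcases eq_or_ne u u₀ with rfl | hu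
    · rfl
    · have := hM (.inr (.inl ⟨u, hu⟩))
      simpa only [M, rect, Sum.elim_inl, Sum.elim_inr, Pi.sub_apply, sub_mul,
        Finset.sum_sub_distrib, sum_ite_mem_mul, Finset.sum_product, Finset.sum_singleton,
        sub_eq_zero] using this
  have hcol : ∀ v, ∑ u, x (u, v) = ∑ u, x (u, v₀) := by
    intro v
    rcases eq_or_ne v v₀ with rfl | hv
    · rfl
    · have := hM (.inr (.inr ⟨v, hv⟩))
      simpa only [M, rect, Sum.elim_inr, Pi.sub_apply, sub_mul, Finset.sum_sub_distrib,
        sum_ite_mem_mul, Finset.sum_product, Finset.sum_singleton, sub_eq_zero] using this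
  have hpos := weakProdForm_pos hV hW hx0 hrow hcol
  simp [h.weakProdForm_eq_sum_blocks, hblocks] at hpos

end WeakProductForm

theorem stmt17 (n : ℕ) (hn : 2 ≤ n) :
    ⌈(((n : ℚ) - 1) ^ 2 + 1) / 2⌉ ≤ (gn n : ℤ) := by
  obtain ⟨A, B, C, D, hP⟩ := exists_isBlockPartition_gGH (SimpleGraph.completeGraph (Fin n))
    (SimpleGraph.completeGraph (Fin n))
  have hcard : 2 ≤ Fintype.card (Fin n) := by simpa using hn
  have hbound : (n - 1) * (n - 1) + 1 ≤ 2 * gn n := by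
    have := hP.card_sub_one_mul_card_sub_one_add_one_le hcard hcard
    rwa [Fintype.card_fin] at this
  have hcast : ((n - 1 : ℕ) : ℚ) = n - 1 := by push_cast [(by omega : 1 ≤ n)]; ring
  rw [Int.ceil_le, div_le_iff₀' two_pos, ← hcast, sq]
  exact_mod_cast hbound
end
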